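/- arXiv:1203.3741 — 6 statements merged into one kernel-verified Lean document; each statement's English description precedes it below -/
import Mathlib

section
/- The binary matroid P₉ has a non-minimal exact 3-separation, namely the partition ({1,2,5,6}, {3,4,7,8,9}) of its ground set. -/
open Matroid Set

/-- The rank of a set in a matroid: the largest cardinality of an independent subset. -/
noncomputable def Matroid.rfun {α : Type*} (M : Matroid α) (X : Set α) : ℕ :=
  sSup {n | ∃ I, M.Indep I ∧ I ⊆ X ∧ I.ncard = n}

/-- The connectivity function λ(X) = r(X) + r(E \ X) - r(M). -/
noncomputable def Matroid.lam {α : Type*} (M : Matroid α) (X : Set α) : ℕ :=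
  M.rfun X + M.rfun (M.E \ X) - M.rfun M.E

/-- A circuit: a minimal dependent set. -/
def Matroid.Cct {α : Type*} (M : Matroid α) (C : Set α) : Prop :=
  C ⊆ M.E ∧ ¬ M.Indep C ∧ ∀ D, D ⊂ C → M.Indep D

/-- Deletion of a set of elements. -/
def Matroid.del {α : Type*} (M : Matroid α) (D : Set α) : Matroid α := M.restrict (M.E \ D)

/-- Contraction of a set of elements. -/
def Matroid.con {α : Type*} (M : Matroid α) (C : Set α) : Matroid α := (M✶.del C)✶

/-- Isomorphism of matroids. -/
def MatroidIso {α β : Type*} (M : Matroid α) (N : Matroid β) : Prop :=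
  ∃ e : M.E ≃ N.E, ∀ I : Set M.E, M.Indep ((↑) '' I) ↔ N.Indep ((↑) '' (⇑e '' I))

/-- `M` has a minor isomorphic to `N`. -/
def HasMinorIso {α β : Type*} (M : Matroid α) (N : Matroid β) : Prop :=
  ∃ C D : Set α, MatroidIso ((M.con C).del D) N

/-- `M` is the binary matroid represented by the columns of the matrix `A`. -/
def IsBinaryRep {n m : ℕ} (A : Matrix (Fin n) (Fin m) (ZMod 2)) (M : Matroid (Fin m)) : Prop :=
  M.E = Set.univ ∧
    ∀ I : Set (Fin m), M.Indep I ↔ LinearIndependent (ZMod 2) (fun i : I => A.transpose i.1)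

/-- A matroid is binary if it is representable over GF(2). -/
def IsBinary {α : Type*} (M : Matroid α) : Prop :=
  ∃ (n : ℕ) (v : α → (Fin n → ZMod 2)), ∀ I : Set α, I ⊆ M.E →
    (M.Indep I ↔ LinearIndependent (ZMod 2) (fun x : I => v x.1))

/-- An exact k-separation. -/
noncomputable def ExactSep {α : Type*} (M : Matroid α) (k : ℕ) (A B : Set α) : Prop :=
  A ∪ B = M.E ∧ Disjoint A B ∧ k ≤ A.ncard ∧ k ≤ B.ncard ∧ M.lam A = k - 1

/-- A matroid is 3-connected if it has no k-separation for k ≤ 2. -/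
noncomputable def ThreeConnected {α : Type*} (M : Matroid α) : Prop :=
  ∀ k : ℕ, ∀ A : Set α, 1 ≤ k → k ≤ 2 → A ⊆ M.E → k ≤ A.ncard → k ≤ (M.E \ A).ncard →
    k ≤ M.lam A

/-- `M` is the cycle matroid of the graph `G`. -/
def IsCycleMatroid {V : Type*} (G : SimpleGraph V) (M : Matroid (Sym2 V)) : Prop :=
  M.E = G.edgeSet ∧ ∀ I : Set (Sym2 V),
    M.Indep I ↔ I ⊆ G.edgeSet ∧ (SimpleGraph.fromEdgeSet I).IsAcyclic

/-- The prism graph: two triangles joined by a perfect matching. -/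
def prismGraph : SimpleGraph (Fin 6) :=
  SimpleGraph.fromEdgeSet
    {s(0,1), s(1,2), s(0,2), s(3,4), s(4,5), s(3,5), s(0,3), s(1,4), s(2,5)}

/-- The graph K₅ minus an edge. -/
def K5e : SimpleGraph (Fin 5) := (SimpleGraph.completeGraph (Fin 5)).deleteEdges {s(0,1)}

/-- H is a minor of G: branch-set definition. -/
def GraphMinor {W V : Type*} (H : SimpleGraph W) (G : SimpleGraph V) : Prop :=
  ∃ f : W → Set V, (∀ w, (f w).Nonempty) ∧ (∀ w, (G.induce (f w)).Connected) ∧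
    (Pairwise fun w w' => Disjoint (f w) (f w')) ∧
    ∀ w w', H.Adj w w' → ∃ a ∈ f w, ∃ b ∈ f w', G.Adj a b

/-- A graph is 3-connected. -/
def GraphThreeConnected {V : Type*} (G : SimpleGraph V) : Prop :=
  4 ≤ Nat.card V ∧ ∀ S : Set V, S.ncard < 3 → (G.induce Sᶜ).Connected

def P9mat : Matrix (Fin 4) (Fin 9) (ZMod 2) :=
  !![1,0,0,0,0,1,1,1,1; 0,1,0,0,1,0,1,1,1; 0,0,1,0,1,1,0,1,0; 0,0,0,1,1,1,1,1,0]

def prismMat : Matrix (Fin 5) (Fin 9) (ZMod 2) :=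
  !![1,0,0,0,0,1,0,1,0; 0,1,0,0,0,1,0,0,1; 0,0,1,0,0,0,0,1,1;
     0,0,0,1,0,0,1,1,0; 0,0,0,0,1,0,1,0,1]

def F7mat : Matrix (Fin 3) (Fin 7) (ZMod 2) :=
  !![1,0,0,1,1,0,1; 0,1,0,1,0,1,1; 0,0,1,0,1,1,1]

/-- The matroid `Z_r`: identity columns, then `b₁,…,b_r` (zeros on the diagonal,
ones elsewhere), then the all-ones column `c_r`. -/
def Zrmat (r : ℕ) : Matrix (Fin r) (Fin (2*r+1)) (ZMod 2) := fun i j =>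
  if (j : ℕ) < r then (if (i : ℕ) = (j : ℕ) then 1 else 0)
  else if (j : ℕ) < 2*r then (if (i : ℕ) + r = (j : ℕ) then 0 else 1)
  else 1

def Z4mat : Matrix (Fin 4) (Fin 9) (ZMod 2) :=
  !![1,0,0,0,0,1,1,1,1; 0,1,0,0,1,0,1,1,1; 0,0,1,0,1,1,0,1,1; 0,0,0,1,1,1,1,0,1]

def AG32mat : Matrix (Fin 4) (Fin 8) (ZMod 2) :=
  !![1,1,1,1,1,1,1,1; 0,0,0,0,1,1,1,1; 0,0,1,1,0,0,1,1; 0,1,0,1,0,1,0,1]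

def S8mat : Matrix (Fin 4) (Fin 8) (ZMod 2) :=
  !![1,0,0,0,1,0,1,1; 0,1,0,0,1,1,0,1; 0,0,1,0,1,1,1,0; 0,0,0,1,1,1,1,1]

def E5mat : Matrix (Fin 5) (Fin 10) (ZMod 2) :=
  !![1,0,0,0,0,0,1,1,1,1; 0,1,0,0,0,1,0,1,1,1; 0,0,1,0,0,1,1,0,1,1;
     0,0,0,1,0,1,1,1,1,0; 0,0,0,0,1,1,1,0,0,0]

def R10mat : Matrix (Fin 5) (Fin 10) (ZMod 2) :=
  !![1,0,0,0,0,1,0,0,1,1; 0,1,0,0,0,1,1,0,0,1; 0,0,1,0,0,1,1,1,0,0;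
     0,0,0,1,0,0,1,1,1,0; 0,0,0,0,1,0,0,1,1,1]

def D1mat : Matrix (Fin 4) (Fin 10) (ZMod 2) :=
  !![1,0,0,0,0,1,1,1,1,1; 0,1,0,0,1,0,1,1,1,1; 0,0,1,0,1,1,0,1,0,1; 0,0,0,1,1,1,1,1,0,0]

def D2mat : Matrix (Fin 4) (Fin 10) (ZMod 2) :=
  !![1,0,0,0,0,1,1,1,1,1; 0,1,0,0,1,0,1,1,1,0; 0,0,1,0,1,1,0,1,0,0; 0,0,0,1,1,1,1,1,0,1]

/-- Representation of the generalized parallel connection of F₇ and M(W₃) across the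
triangle consisting of columns 0, 1, 2 (the triangle is {e₁, e₂, e₁+e₂}); column 2
(= e₁+e₂) is the rim element of the triangle. -/
def PFW3mat : Matrix (Fin 4) (Fin 10) (ZMod 2) :=
  !![1,0,1,0,1,0,1,0,1,0; 0,1,1,0,0,1,1,0,0,1; 0,0,0,1,1,1,1,0,0,0; 0,0,0,0,0,0,0,1,1,1]

/-- Representation of the generalized parallel connection of F₇ and F₇ across the
triangle consisting of columns 0, 1, 2. -/
def PFFmat : Matrix (Fin 4) (Fin 11) (ZMod 2) :=
  !![1,0,1,0,1,0,1,0,1,0,1; 0,1,1,0,0,1,1,0,0,1,1; 0,0,0,1,1,1,1,0,0,0,0;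
     0,0,0,0,0,0,0,1,1,1,1]

def Amat : Matrix (Fin 5) (Fin 11) (ZMod 2) :=
  !![1,0,0,0,0,0,1,1,1,1,0; 0,1,0,0,0,1,0,1,1,0,0; 0,0,1,0,0,1,1,0,1,1,1;
     0,0,0,1,0,1,1,1,1,0,0; 0,0,0,0,1,1,1,0,0,0,1]

def Bmat : Matrix (Fin 5) (Fin 11) (ZMod 2) :=
  !![1,0,0,0,0,0,1,1,1,1,1; 0,1,0,0,0,1,0,1,1,0,0; 0,0,1,0,0,1,1,0,1,1,0;
     0,0,0,1,0,1,1,1,1,0,1; 0,0,0,0,1,1,1,0,0,0,1]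

def Cmat : Matrix (Fin 5) (Fin 11) (ZMod 2) :=
  !![1,0,0,0,0,0,1,1,1,1,1; 0,1,0,0,0,1,0,1,1,0,1; 0,0,1,0,0,1,1,0,1,1,0;
     0,0,0,1,0,1,1,1,1,0,0; 0,0,0,0,1,1,1,0,0,0,1]

/-- The matroid Z: R₁₀ extended by the column (0,1,0,1,1)ᵀ. -/
def Zextmat : Matrix (Fin 5) (Fin 11) (ZMod 2) :=
  !![1,0,0,0,0,1,0,0,1,1,0; 0,1,0,0,0,1,1,0,0,1,1; 0,0,1,0,0,1,1,1,0,0,0;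
     0,0,0,1,0,0,1,1,1,0,1; 0,0,0,0,1,0,0,1,1,1,1]

def wheel4Graph : SimpleGraph (Fin 5) :=
  SimpleGraph.fromEdgeSet {s(0,1), s(1,2), s(2,3), s(0,3), s(0,4), s(1,4), s(2,4), s(3,4)}

/-!
Elements are zero-indexed, so the separation is `({0, 1, 4, 5}, {2, 3, 6, 7, 8})`. In the binary
representation the columns `{0, 1, 4}` span the left side (`c₅ = c₀ + c₁ + c₄`) and `{2, 3, 6}`
span the right side (`c₇ = c₆ + c₂`, `c₈ = c₆ + c₃`), so both sides have rank 3, while `M` has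
rank 4 since columns `0, …, 3` are the standard basis. Hence `λ = 3 + 3 - 4 = 2`.
-/

namespace Matroid

variable {α : Type*} {M : Matroid α} {I X : Set α}

lemma IsBasis.rfun_eq_ncard (hI : M.IsBasis I X) (hfin : I.Finite) : M.rfun X = I.ncard := by
  have hle : ∀ J, M.Indep J → J ⊆ X → J.ncard ≤ I.ncard := by
    intro J hJ hJX
    have hJI : J.encard ≤ I.encard := hI.encard_eq_eRk ▸ hJ.encard_le_eRk_of_subset hJX
    have hJfin : J.Finite := Set.finite_of_encard_le_coe (hJI.trans_eq hfin.cast_ncard_eq.symm)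
    exact_mod_cast (hJfin.cast_ncard_eq.trans_le hJI).trans_eq hfin.cast_ncard_eq.symm
  have hbdd : BddAbove {n | ∃ J, M.Indep J ∧ J ⊆ X ∧ J.ncard = n} := by
    refine ⟨I.ncard, ?_⟩
    rintro _ ⟨J, hJ, hJX, rfl⟩
    exact hle J hJ hJX
  refine le_antisymm (csSup_le ⟨_, I, hI.indep, hI.subset, rfl⟩ ?_) ?_
  · rintro _ ⟨J, hJ, hJX, rfl⟩
    exact hle J hJ hJX
  · exact le_csSup hbdd ⟨I, hI.indep, hI.subset, rfl⟩

variable {K V : Type*} [DivisionRing K] [AddCommGroup V] [Module K V] {v : α → V}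

lemma isBasis_of_linearIndepOn_of_subset_span (hM : ∀ J, M.Indep J ↔ LinearIndepOn K v J)
    (hX : X ⊆ M.E) (hIX : I ⊆ X) (hI : LinearIndepOn K v I)
    (hspan : ∀ e ∈ X \ I, v e ∈ Submodule.span K (v '' I)) : M.IsBasis I X := by
  refine ((hM I).2 hI).isBasis_of_forall_insert hIX fun e he ↦ ?_
  refine ⟨fun hins ↦ ?_, insert_subset (hX he.1) (hIX.trans hX)⟩
  exact ((linearIndepOn_insert he.2).1 ((hM _).1 hins)).2 (hspan e he)

lemma rfun_eq_ncard_of_linearIndepOn_of_subset_span (hM : ∀ J, M.Indep J ↔ LinearIndepOn K v J)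
    (hX : X ⊆ M.E) (hIX : I ⊆ X) (hI : LinearIndepOn K v I) (hfin : I.Finite)
    (hspan : ∀ e ∈ X \ I, v e ∈ Submodule.span K (v '' I)) : M.rfun X = I.ncard :=
  (isBasis_of_linearIndepOn_of_subset_span hM hX hIX hI hspan).rfun_eq_ncard hfin

lemma rfun_ground_eq_finrank [FiniteDimensional K V] (hM : ∀ J, M.Indep J ↔ LinearIndepOn K v J)
    (hIE : I ⊆ M.E) (hI : LinearIndepOn K v I) (hfin : I.Finite)
    (hcard : I.ncard = Module.finrank K V) : M.rfun M.E = Module.finrank K V := by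
  have := hfin.fintype
  have htop : Submodule.span K (v '' I) = ⊤ := by
    rw [image_eq_range]
    refine LinearIndependent.span_eq_top_of_card_eq_finrank' hI ?_
    rw [← hcard, ← Nat.card_coe_set_eq, Nat.card_eq_fintype_card]
  refine hcard ▸ rfun_eq_ncard_of_linearIndepOn_of_subset_span hM subset_rfl hIE hI hfin
    fun e _ ↦ ?_
  simp [htop]

end Matroid

open Matroid Submodule

section P9

variable {M : Matroid (Fin 9)}

def P9col (i : Fin 9) : Fin 4 → ZMod 2 := P9mat.transpose i

lemma rfun_P9_left (hM : IsBinaryRep P9mat M) : M.rfun {0, 1, 4, 5} = 3 := by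
  have hI : LinearIndepOn (ZMod 2) P9col {0, 1, 4} := by
    unfold LinearIndepOn; rw [Fintype.linearIndependent_iff]; decide
  have hmem : ∀ i ∈ ({0, 1, 4} : Set (Fin 9)), P9col i ∈ span (ZMod 2) (P9col '' {0, 1, 4}) :=
    fun i hi ↦ subset_span (mem_image_of_mem P9col hi)
  have h5 : P9col 5 = P9col 0 + P9col 1 + P9col 4 := by decide
  refine (rfun_eq_ncard_of_linearIndepOn_of_subset_span (v := P9col) hM.2
    (hM.1 ▸ subset_univ _) (by simp) hI (toFinite _) fun e he ↦ ?_).trans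
    (by rw [ncard_eq_toFinset_card']; rfl)
  obtain rfl : e = 5 := by simp only [mem_sdiff, mem_insert_iff, mem_singleton_iff] at he; omega
  rw [h5]
  exact add_mem (add_mem (hmem 0 (by simp)) (hmem 1 (by simp))) (hmem 4 (by simp))

lemma rfun_P9_right (hM : IsBinaryRep P9mat M) : M.rfun {2, 3, 6, 7, 8} = 3 := by
  have hI : LinearIndepOn (ZMod 2) P9col {2, 3, 6} := by
    unfold LinearIndepOn; rw [Fintype.linearIndependent_iff]; decide
  have hmem : ∀ i ∈ ({2, 3, 6} : Set (Fin 9)), P9col i ∈ span (ZMod 2) (P9col '' {2, 3, 6}) :=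
    fun i hi ↦ subset_span (mem_image_of_mem P9col hi)
  have h7 : P9col 7 = P9col 6 + P9col 2 := by decide
  have h8 : P9col 8 = P9col 6 + P9col 3 := by decide
  refine (rfun_eq_ncard_of_linearIndepOn_of_subset_span (v := P9col) hM.2
    (hM.1 ▸ subset_univ _) (by simp) hI (toFinite _) fun e he ↦ ?_).trans
    (by rw [ncard_eq_toFinset_card']; rfl)
  obtain rfl | rfl : e = 7 ∨ e = 8 := by
    simp only [mem_sdiff, mem_insert_iff, mem_singleton_iff] at he; omega
  · rw [h7]
    exact add_mem (hmem 6 (by simp)) (hmem 2 (by simp))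
  · rw [h8]
    exact add_mem (hmem 6 (by simp)) (hmem 3 (by simp))

lemma rfun_P9_ground (hM : IsBinaryRep P9mat M) : M.rfun M.E = 4 := by
  have hI : LinearIndepOn (ZMod 2) P9col {0, 1, 2, 3} := by
    unfold LinearIndepOn; rw [Fintype.linearIndependent_iff]; decide
  refine (rfun_ground_eq_finrank (v := P9col) hM.2 (hM.1 ▸ subset_univ _) hI
    (toFinite _) ?_).trans (Module.finrank_fin_fun _)
  rw [Module.finrank_fin_fun, ncard_eq_toFinset_card']
  rfl

end P9

/-- P₉ has a non-minimal exact 3-separation ({1,2,5,6}, {3,4,7,8,9})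
(zero-indexed: ({0,1,4,5}, {2,3,6,7,8})). -/
theorem stmt_4 (M : Matroid (Fin 9)) (hM : IsBinaryRep P9mat M) :
    ExactSep M 3 {0, 1, 4, 5} {2, 3, 6, 7, 8} ∧
      4 ≤ ({0, 1, 4, 5} : Set (Fin 9)).ncard ∧
      4 ≤ ({2, 3, 6, 7, 8} : Set (Fin 9)).ncard := by
  have hcompl : M.E \ {0, 1, 4, 5} = {2, 3, 6, 7, 8} := by
    rw [hM.1]; ext e; revert e; decide
  have hlam : M.lam {0, 1, 4, 5} = 2 := by
    rw [Matroid.lam, hcompl, rfun_P9_left hM, rfun_P9_right hM, rfun_P9_ground hM]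
  have hcardA : ({0, 1, 4, 5} : Set (Fin 9)).ncard = 4 := by rw [ncard_eq_toFinset_card']; rfl
  have hcardB : ({2, 3, 6, 7, 8} : Set (Fin 9)).ncard = 5 := by rw [ncard_eq_toFinset_card']; rfl
  refine ⟨⟨?_, ?_, by omega, by omega, hlam⟩, by omega, by omega⟩
  · rw [hM.1]; ext e; revert e; decide
  · rw [disjoint_left]; intro e; simp only [mem_insert_iff, mem_singleton_iff]; omega
end

section
/- For every r ≥ 4, the matroid Zᵣ is non-regular; in particular it has a minor isomorphic to the Fano matroid F₇ or its dual F₇*. -/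
open Matroid Set

/-!
Contracting the unit columns `e₄, …, e_r` of `Z_r` and deleting `b₄, …, b_r` leaves the seven
columns `e₁, e₂, e₃, b₁, b₂, b₃, c_r`. Contracting linearly independent columns amounts to
passing to the quotient by their span, which here is the kernel of the projection onto the first
three coordinates; the projected columns are the seven nonzero vectors of `GF(2)³`, i.e. `F₇`.
-/

open Submodule in
theorem LinearIndepOn.comp_iff_union_of_ker_eq_span {R M M' ι : Type*} [Ring R]
    [AddCommGroup M] [Module R M] [AddCommGroup M'] [Module R M'] {f : ι → M} {s t : Set ι}
    (hs : LinearIndepOn R f s) (hst : Disjoint s t) (π : M →ₗ[R] M')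
    (hπ : LinearMap.ker π = span R (f '' s)) :
    LinearIndepOn R (π ∘ f) t ↔ LinearIndepOn R f (s ∪ t) := by
  rw [← hs.quotient_iff_union hst, ← hπ, ← (LinearMap.ker π).liftQ_mkQ π le_rfl,
    LinearMap.coe_comp, Function.comp_assoc]
  exact LinearMap.linearIndepOn_iff_of_injOn _
    (LinearMap.ker_eq_bot.1 (ker_liftQ_eq_bot' _ π rfl)).injOn

theorem LinearMap.ker_funLeft_eq_span {R m n : Type*} [Semiring R] [Finite n] (f : m → n) :
    LinearMap.ker (LinearMap.funLeft R R f) =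
      Submodule.span R (Pi.basisFun R n '' (Set.range f)ᶜ) := by
  ext x
  simp only [LinearMap.mem_ker, Module.Basis.mem_span_image, subset_compl_iff_disjoint_right,
    Set.disjoint_right, forall_mem_range]
  simp [funext_iff]

theorem LinearIndepOn.image_iff_comp {R M ι ι' : Type*} [Semiring R] [AddCommMonoid M] [Module R M]
    {v : ι → M} {f : ι' → ι} {s : Set ι'} (hf : InjOn f s) :
    LinearIndepOn R v (f '' s) ↔ LinearIndepOn R (v ∘ f) s :=
  ⟨fun h ↦ h.comp_of_image hf, LinearIndepOn.image_of_comp f v⟩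

namespace Matroid

variable {α : Type*} (M : Matroid α) (X : Set α)

theorem del_eq_delete : M.del X = M ＼ X := rfl

theorem con_eq_contract : M.con X = M ／ X := rfl

end Matroid

theorem MatroidIso.of_injective {α β : Type*} {M : Matroid α} {N : Matroid β} (g : β → α)
    (hg : Function.Injective g) (hM : M.E = range g) (hN : N.E = univ)
    (hindep : ∀ I, M.Indep (g '' I) ↔ N.Indep I) : MatroidIso M N := by
  let e : M.E ≃ N.E := (Equiv.setCongr hM).trans
    ((Equiv.ofInjective g hg).symm.trans ((Equiv.Set.univ β).symm.trans (Equiv.setCongr hN.symm)))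
  have he : ∀ x, g (e x) = x := fun x ↦ Equiv.apply_ofInjective_symm hg ⟨x, hM ▸ x.2⟩
  refine ⟨e, fun I ↦ ?_⟩
  rw [← hindep, image_image, image_image]
  simp only [he]

open scoped Matrix

namespace Zr

variable {r : ℕ}

def cols (r : ℕ) : Fin (2 * r + 1) → Fin r → ZMod 2 := (Zrmat r)ᵀ

theorem cols_apply (j : Fin (2 * r + 1)) (i : Fin r) : cols r j i = Zrmat r i j := rfl

theorem cols_comp_castLE (h : r ≤ 2 * r + 1) :
    cols r ∘ Fin.castLE h = Pi.basisFun (ZMod 2) (Fin r) := by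
  ext i j
  simp [cols_apply, Zrmat, Pi.single_apply, Fin.ext_iff, eq_comm]

/-- The columns `e₄, …, e_r`. -/
def contractedCols (r : ℕ) : Set (Fin (2 * r + 1)) :=
  Fin.castLE (by omega) '' {i : Fin r | 3 ≤ (i : ℕ)}

theorem linearIndepOn_contractedCols : LinearIndepOn (ZMod 2) (cols r) (contractedCols r) :=
  LinearIndepOn.image_of_comp _ _ <| by
    rw [cols_comp_castLE]
    exact (Pi.basisFun _ _).linearIndependent.linearIndepOn _

def projFirstThree (hr : 3 ≤ r) : (Fin r → ZMod 2) →ₗ[ZMod 2] (Fin 3 → ZMod 2) :=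
  LinearMap.funLeft _ _ (Fin.castLE hr)

theorem ker_projFirstThree (hr : 3 ≤ r) :
    LinearMap.ker (projFirstThree hr) = Submodule.span (ZMod 2) (cols r '' contractedCols r) := by
  rw [projFirstThree, LinearMap.ker_funLeft_eq_span, contractedCols, ← image_comp,
    cols_comp_castLE, Fin.range_castLE]
  congr
  ext i
  simp

/-- The columns `e₁, e₂, e₃, b₃, b₂, b₁, c_r`, in the order of the columns of `F7mat`. -/
def fanoCols (hr : 3 ≤ r) : Fin 7 → Fin (2 * r + 1) :=
  ![⟨0, by omega⟩, ⟨1, by omega⟩, ⟨2, by omega⟩, ⟨r + 2, by omega⟩, ⟨r + 1, by omega⟩,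
    ⟨r, by omega⟩, ⟨2 * r, by omega⟩]

theorem fanoCols_injective (hr : 3 ≤ r) : Function.Injective (fanoCols hr) := by
  intro a b h
  fin_cases a <;> fin_cases b <;> simp [fanoCols, Fin.ext_iff] at h ⊢ <;> omega

theorem disjoint_range_fanoCols (hr : 3 ≤ r) :
    Disjoint (range (fanoCols hr)) (contractedCols r) := by
  rw [Set.disjoint_left]
  rintro _ ⟨k, rfl⟩ ⟨i, hi : 3 ≤ (i : ℕ), hik⟩
  have := i.2
  fin_cases k <;> simp [fanoCols, Fin.ext_iff] at hik <;> omega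

theorem projFirstThree_comp_fanoCols (hr : 3 ≤ r) :
    projFirstThree hr ∘ cols r ∘ fanoCols hr = fun k ↦ F7matᵀ k := by
  ext k i
  fin_cases k <;> fin_cases i <;> simp [projFirstThree, cols_apply, fanoCols, Zrmat, F7mat] <;>
    (try split_ifs) <;> first | rfl | omega

end Zr

open Zr in
/-- For r ≥ 4, the matroid Zᵣ is non-regular: it has a minor isomorphic to F₇ or F₇*. -/
theorem stmt_7 (r : ℕ) (hr : 4 ≤ r) (Z : Matroid (Fin (2*r+1))) (hZ : IsBinaryRep (Zrmat r) Z)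
    (F : Matroid (Fin 7)) (hF : IsBinaryRep F7mat F) :
    HasMinorIso Z F ∨ HasMinorIso Z F✶ := by
  have hr3 : 3 ≤ r := by omega
  set g := fanoCols hr3
  set C := contractedCols r
  have hgC : Disjoint (range g) C := disjoint_range_fanoCols hr3
  have hZ_indep : ∀ J, Z.Indep J ↔ LinearIndepOn (ZMod 2) (cols r) J := hZ.2
  have hC : Z.Indep C := (hZ_indep C).2 linearIndepOn_contractedCols
  -- the deleted columns `(range g ∪ C)ᶜ` are `b₄, …, b_r`
  refine .inl ⟨C, (range g ∪ C)ᶜ, MatroidIso.of_injective g (fanoCols_injective hr3) ?_ hF.1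
    fun I ↦ ?_⟩
  · show (Z.E \ C) \ (range g ∪ C)ᶜ = range g
    ext x
    have : x ∈ range g → x ∉ C := fun hx ↦ Set.disjoint_left.1 hgC hx
    simp only [hZ.1, mem_sdiff, mem_univ, mem_compl_iff, mem_union]
    tauto
  · have hIC : Disjoint (g '' I) C := hgC.mono_left (image_subset_range g I)
    have hID : Disjoint (g '' I) (range g ∪ C)ᶜ :=
      disjoint_compl_right.mono_left ((image_subset_range g I).trans subset_union_left)
    rw [Matroid.con_eq_contract, Matroid.del_eq_delete, Matroid.delete_indep_iff,
      hC.contract_indep_iff, hZ_indep, hF.2, union_comm,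
      ← linearIndepOn_contractedCols.comp_iff_union_of_ker_eq_span hIC.symm _
        (ker_projFirstThree hr3), LinearIndepOn.image_iff_comp (fanoCols_injective hr3).injOn,
      Function.comp_assoc, projFirstThree_comp_fanoCols, and_iff_right hIC, and_iff_left hID]
    rfl
end

section
/- The matroid Z₄ with the column c₄ deleted is isomorphic to the binary affine geometry AG(3,2). -/
open Matroid Set

/-!
The eight columns of Z₄ other than c₄ are exactly the odd-weight vectors of GF(2)⁴. The involution
`parityShear`, which replaces the first coordinate by the sum of all coordinates, maps them onto
the vectors with first coordinate 1, which are the points of AG(3,2). An injective linear map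
preserves linear independence, so matching the columns along it is a matroid isomorphism.
-/

open Matrix

theorem linearIndepOn_comp_subtype_val_iff {ι M R : Type*} [Semiring R] [AddCommMonoid M]
    [Module R M] {s : Set ι} (v : ι → M) (I : Set s) :
    LinearIndepOn R (v ∘ Subtype.val) I ↔ LinearIndepOn R v (Subtype.val '' I) :=
  linearIndependent_equiv' (Equiv.Set.image _ I Subtype.val_injective) rfl

theorem matroidIso_of_linearIndepOn {α β R V W : Type*} [Ring R] [AddCommGroup V] [Module R V]
    [AddCommGroup W] [Module R W] {M : Matroid α} {N : Matroid β} {v : α → V} {w : β → W}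
    (hM : ∀ I ⊆ M.E, M.Indep I ↔ LinearIndepOn R v I)
    (hN : ∀ J ⊆ N.E, N.Indep J ↔ LinearIndepOn R w J)
    (e : M.E ≃ N.E) (f : V →ₗ[R] W) (hf : Function.Injective f)
    (hvw : ∀ x : M.E, f (v x) = w (e x)) : MatroidIso M N := by
  refine ⟨e, fun I => ?_⟩
  have hfv : f ∘ v ∘ Subtype.val = (w ∘ Subtype.val) ∘ e := funext hvw
  rw [hM _ (by simp), hN _ (by simp), ← linearIndepOn_comp_subtype_val_iff,
    ← linearIndepOn_comp_subtype_val_iff, ← linearIndepOn_equiv, ← hfv,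
    f.linearIndepOn_iff_of_injOn hf.injOn]

theorem IsBinaryRep.indep_del_iff {n m : ℕ} {A : Matrix (Fin n) (Fin m) (ZMod 2)}
    {M : Matroid (Fin m)} (hM : IsBinaryRep A M) (D : Set (Fin m)) :
    ∀ I ⊆ (M.del D).E, (M.del D).Indep I ↔ LinearIndepOn (ZMod 2) Aᵀ I := fun I hI => by
  rw [Matroid.del, restrict_indep_iff]
  exact (and_iff_left hI).trans (hM.2 I)

def z4ColToAG32Col : {x : Fin 9 // x ≠ 8} ≃ Fin 8 :=
  (finSuccAboveEquiv 8).symm.trans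
    ⟨![0, 4, 2, 1, 7, 3, 5, 6], ![0, 3, 2, 5, 1, 6, 7, 4], by decide, by decide⟩

def parityShear : Matrix (Fin 4) (Fin 4) (ZMod 2) := !![1,1,1,1; 0,1,0,0; 0,0,1,0; 0,0,0,1]

theorem parityShear_mul_self : parityShear * parityShear = 1 := by decide

theorem parityShear_mulVec_col (x : {x : Fin 9 // x ≠ 8}) :
    parityShear *ᵥ Z4matᵀ x = AG32matᵀ (z4ColToAG32Col x) := by
  revert x; decide

/-- Z₄ with the column c₄ (index 8) deleted is isomorphic to AG(3,2). -/
theorem stmt_8 (M : Matroid (Fin 9)) (hM : IsBinaryRep Z4mat M)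
    (N : Matroid (Fin 8)) (hN : IsBinaryRep AG32mat N) :
    MatroidIso (M.del {8}) N := by
  have hE : (M.del {8}).E = {8}ᶜ := by simp [Matroid.del, hM.1, compl_eq_univ_sdiff]
  let e : (M.del {8}).E ≃ N.E := (Equiv.setCongr hE).trans <| z4ColToAG32Col.trans <|
    (Equiv.Set.univ _).symm.trans (Equiv.setCongr hN.1.symm)
  refine matroidIso_of_linearIndepOn (hM.indep_del_iff {8}) (fun J _ => hN.2 J) e
    parityShear.mulVecLin ?_ fun x => parityShear_mulVec_col (Equiv.setCongr hE x)
  exact Function.LeftInverse.injective (g := parityShear.mulVec) fun v => by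
    rw [mulVecLin_apply, mulVec_mulVec, parityShear_mul_self, one_mulVec]
end

section
/- The matroid E₅, represented over GF(2) by the matrix [I₅ | D] with D having columns (0,1,1,1,1)ᵀ, (1,0,1,1,1)ᵀ, (1,1,0,1,0)ᵀ, (1,1,1,1,0)ᵀ, (1,1,1,0,0)ᵀ, is self-dual: E₅ ≅ E₅*. -/
open Matroid Set

/-!
If `A` represents `M` over a field, then `M✶` is represented by any matrix `A'` whose kernel is
the row space of `A`: that `X` is coindependent in `M`, and that `X` is independent for `A'`, both
say that no nonzero vector of this subspace is supported on `X`. Permuting the columns of `E5mat`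
by the involution `(0 2)(1 7)(3 6)(4 8)(5 9)` gives a rank-5 matrix whose rows are orthogonal to
those of `E5mat`, so its kernel is the 5-dimensional row space of `E5mat`. Hence `M✶` is
represented by a column permutation of `E5mat`, that is, it is isomorphic to `M`.
-/

open scoped Matrix

def IsMatrixRep {K m ι : Type*} [Field K] (A : Matrix m ι K) (M : Matroid ι) : Prop :=
  M.E = univ ∧ ∀ I, M.Indep I ↔ LinearIndepOn K A.col I

section LinearAlgebra

variable {K m m' ι : Type*} [Field K]

theorem linearIndepOn_col_iff [Fintype ι] (A : Matrix m ι K) (X : Set ι) :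
    LinearIndepOn K A.col X ↔
      ∀ v ∈ LinearMap.ker A.mulVecLin, (∀ j ∉ X, v j = 0) → v = 0 := by
  have hcomb : ∀ l : ι →₀ K, Finsupp.linearCombination K A.col l = A *ᵥ ⇑l := by
    intro l
    ext i
    rw [Finsupp.linearCombination_apply, Finsupp.sum_fintype _ _ (by simp)]
    simp [Matrix.mulVec, dotProduct, mul_comm, Matrix.col]
  rw [linearIndepOn_iff]
  constructor
  · intro h v hv hX
    have := h (Finsupp.equivFunOnFinite.symm v) ((Finsupp.mem_supported' _ _).2 (by simpa using hX))
      (by simpa [hcomb] using hv)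
    simpa using congrArg (⇑) this
  · intro h l hl h0
    ext j
    exact congrFun (h l (by simpa [hcomb] using h0) ((Finsupp.mem_supported' _ _).1 hl)) j

theorem rank_eq_card_of_mul_eq_one [Fintype m] [Fintype ι] [DecidableEq m] {A : Matrix m ι K}
    {S : Matrix ι m K} (h : A * S = 1) : A.rank = Fintype.card m :=
  le_antisymm A.rank_le_card_height (by simpa [h] using A.rank_mul_le_left S)

theorem range_vecMulLinear_eq_ker_mulVecLin [Fintype m] [Fintype ι]
    {A : Matrix m ι K} {A' : Matrix m' ι K} (h : A' * Aᵀ = 0)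
    (hrank : A.rank + A'.rank = Fintype.card ι) :
    LinearMap.range A.vecMulLinear = LinearMap.ker A'.mulVecLin := by
  refine Submodule.eq_of_le_of_finrank_eq ?_ ?_
  · rintro _ ⟨y, rfl⟩
    simp [← Matrix.mulVec_transpose, Matrix.mulVec_mulVec, h]
  · have hker := LinearMap.finrank_range_add_finrank_ker A'.mulVecLin
    rw [range_vecMulLinear, ← Matrix.rank_eq_finrank_span_row]
    rw [Module.finrank_fintype_fun_eq_card] at hker
    change A'.rank + _ = _ at hker
    omega

end LinearAlgebra

theorem matroidIso_of_indep_iff {α β : Type*} {M : Matroid α} {N : Matroid β} (e : α ≃ β)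
    (hM : M.E = univ) (hN : N.E = univ) (h : ∀ I, M.Indep I ↔ N.Indep (e '' I)) :
    MatroidIso M N :=
  ⟨e.subtypeEquiv (by simp [hM, hN]), fun I ↦ by simp [h, image_image]⟩

namespace IsMatrixRep

variable {K m ι : Type*} [Field K] {A : Matrix m ι K} {M : Matroid ι}

theorem indep_insert_iff (hM : IsMatrixRep A M) {I : Set ι} {j : ι} (hI : M.Indep I)
    (hj : j ∉ I) : M.Indep (insert j I) ↔ A.col j ∉ Submodule.span K (A.col '' I) := by
  rw [hM.2, linearIndepOn_insert hj]
  exact and_iff_right ((hM.2 I).1 hI)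

theorem col_mem_span_of_isBasis (hM : IsMatrixRep A M) {I Y : Set ι} {j : ι}
    (hI : M.IsBasis I Y) (hj : j ∈ Y) : A.col j ∈ Submodule.span K (A.col '' I) := by
  by_cases hjI : j ∈ I
  · exact Submodule.subset_span (mem_image_of_mem _ hjI)
  · by_contra h
    exact (hI.insert_dep ⟨hj, hjI⟩).not_indep ((hM.indep_insert_iff hI.indep hjI).2 h)

theorem isBase_of_forall_col_mem_span (hM : IsMatrixRep A M) {I : Set ι} (hI : M.Indep I)
    (h : ∀ j, A.col j ∈ Submodule.span K (A.col '' I)) : M.IsBase I :=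
  hI.isBase_of_forall_insert fun j hj hins ↦ (hM.indep_insert_iff hI hj.2).1 hins (h j)

theorem dual_indep_iff [Fintype m] [DecidableEq m] (hM : IsMatrixRep A M) {X : Set ι} :
    M✶.Indep X ↔
      ∀ u ∈ LinearMap.range A.vecMulLinear, (∀ j ∉ X, u j = 0) → u = 0 := by
  rw [dual_indep_iff_exists', hM.1]
  constructor
  · rintro ⟨-, B, hB, hXB⟩ _ ⟨y, rfl⟩ hu
    have hspan : Submodule.span K (A.col '' B) ≤ LinearMap.ker (dotProductEquiv K m y) := by
      rw [Submodule.span_le]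
      rintro _ ⟨b, hb, rfl⟩
      exact hu b (hXB.notMem_of_mem_right hb)
    ext j
    exact hspan (hM.col_mem_span_of_isBasis hB.isBasis_ground (by simp [hM.1]))
  · intro h
    -- A basis of `Xᶜ` is a base: a column outside its span would be separated from it by a
    -- functional, giving a nonzero row-space vector supported on `X`.
    obtain ⟨I, hI⟩ := M.exists_isBasis Xᶜ (by simp [hM.1])
    refine ⟨subset_univ X, I, hM.isBase_of_forall_col_mem_span hI.indep fun j ↦ ?_,
      disjoint_compl_right.mono_right hI.subset⟩
    by_contra hj
    obtain ⟨f, hfj, hf⟩ := Submodule.exists_le_ker_of_notMem hj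
    set y := (dotProductEquiv K m).symm f
    have hy : ∀ k, (y ᵥ* A) k = f (A.col k) := fun k ↦ by
      rw [← (dotProductEquiv K m).apply_symm_apply f]
      rfl
    have hyA : y ᵥ* A = 0 :=
      h _ ⟨y, rfl⟩ fun k hk ↦ by rw [hy]; exact hf (hM.col_mem_span_of_isBasis hI hk)
    exact hfj (by rw [← hy, hyA]; rfl)

theorem dual [Fintype m] [Fintype ι] {m' : Type*} {A' : Matrix m' ι K} (hM : IsMatrixRep A M)
    (hA : LinearMap.range A.vecMulLinear = LinearMap.ker A'.mulVecLin) : IsMatrixRep A' M✶ := by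
  classical
  refine ⟨hM.1, fun X ↦ ?_⟩
  rw [hM.dual_indep_iff, hA, linearIndepOn_col_iff]

theorem matroidIso_of_submatrix (hM : IsMatrixRep A M) (σ : Equiv.Perm ι) {N : Matroid ι}
    (hN : IsMatrixRep (A.submatrix id σ) N) : MatroidIso M N := by
  refine matroidIso_of_indep_iff σ.symm hM.1 hN.1 fun I ↦ ?_
  rw [hM.2, hN.2, show (A.submatrix id σ).col = A.col ∘ σ from rfl, linearIndepOn_equiv,
    σ.image_symm_image]

end IsMatrixRep

theorem IsBinaryRep.isMatrixRep {n m : ℕ} {A : Matrix (Fin n) (Fin m) (ZMod 2)}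
    {M : Matroid (Fin m)} (hM : IsBinaryRep A M) : IsMatrixRep A M :=
  hM

def E5perm : Equiv.Perm (Fin 10) :=
  Function.Involutive.toPerm ![2, 7, 0, 6, 8, 9, 3, 1, 4, 5] (by unfold Function.Involutive; decide)

theorem E5mat_rank : E5mat.rank = 5 :=
  rank_eq_card_of_mul_eq_one (S := Matrix.of fun j i ↦ if (j : ℕ) = i then 1 else 0) (by decide)

theorem E5mat_submatrix_mul_transpose : E5mat.submatrix id E5perm * E5matᵀ = 0 := by
  decide

/-- The matroid E₅ is self-dual. -/
theorem stmt_10 (M : Matroid (Fin 10)) (hM : IsBinaryRep E5mat M) :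
    MatroidIso M M✶ := by
  have hrank : (E5mat.submatrix id E5perm).rank = 5 :=
    (E5mat.rank_submatrix (Equiv.refl _) E5perm).trans E5mat_rank
  have hdual : IsMatrixRep (E5mat.submatrix id E5perm) M✶ :=
    hM.isMatrixRep.dual (range_vecMulLinear_eq_ker_mulVecLin E5mat_submatrix_mul_transpose
      (by rw [E5mat_rank, hrank]; rfl))
  exact hM.isMatrixRep.matroidIso_of_submatrix E5perm hdual
end

section
/- The matroid P₉ is isomorphic to the generalized parallel connection P_Δ(F₇, M(W₃)) of the Fano matroid and the rank-3 wheel across a common triangle, with the rim element of the triangle deleted. -/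
open Matroid Set

/-!
Both matroids are binary of rank 4, so it suffices to exhibit an invertible matrix over GF(2)
carrying the nine columns of `P9mat` bijectively onto the columns of `PFW3mat` other than the rim
element 2: an injective linear map preserves linear (in)dependence of every subfamily.
-/

open Function
open scoped Matrix

theorem linearIndepOn_image_iff_of_map_eq {R V W ι ι' : Type*} [Ring R]
    [AddCommGroup V] [Module R V] [AddCommGroup W] [Module R W]
    (φ : V →ₗ[R] W) (hφ : Injective φ) {v : ι → V} {w : ι' → W} {f : ι → ι'}
    (hf : Injective f) (hvw : ∀ i, φ (v i) = w (f i)) (s : Set ι) :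
    LinearIndepOn R w (f '' s) ↔ LinearIndepOn R v s := by
  have hcomp : w ∘ f = φ ∘ v := funext fun i => (hvw i).symm
  rw [← φ.linearIndepOn_iff_of_injOn hφ.injOn, ← hcomp]
  exact (linearIndependent_equiv' (Equiv.Set.image f s hf) rfl).symm

theorem matroidIso_of_bijOn {α β : Type*} {M : Matroid α} {N : Matroid β} {f : α → β}
    (hf : BijOn f M.E N.E) (hindep : ∀ I ⊆ M.E, M.Indep I ↔ N.Indep (f '' I)) :
    MatroidIso M N := by
  refine ⟨hf.equiv f, fun I => ?_⟩
  have himage : ((↑) '' (hf.equiv f '' I) : Set β) = f '' ((↑) '' I) := by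
    simp only [image_image, BijOn.equiv, Equiv.ofBijective_apply, MapsTo.val_restrict_apply]
  rw [himage]
  exact hindep _ (Subtype.coe_image_subset _ _)

theorem IsBinaryRep.matroidIso_del {n n' m m' : ℕ} {A : Matrix (Fin n) (Fin m) (ZMod 2)}
    {B : Matrix (Fin n') (Fin m') (ZMod 2)} {M : Matroid (Fin m)} {N : Matroid (Fin m')}
    (hM : IsBinaryRep A M) (hN : IsBinaryRep B N) {T : Matrix (Fin n') (Fin n) (ZMod 2)}
    (hT : Injective T.mulVec) {f : Fin m → Fin m'} (hf : Injective f) {D : Set (Fin m')}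
    (hrange : range f = Dᶜ) (hcol : ∀ j, T *ᵥ Aᵀ j = Bᵀ (f j)) :
    MatroidIso M (N.del D) := by
  obtain ⟨hME, hMindep⟩ := hM
  obtain ⟨hNE, hNindep⟩ := hN
  have hdelE : (N.del D).E = Dᶜ := by
    simp only [Matroid.del, restrict_ground_eq, hNE, compl_eq_univ_sdiff]
  refine matroidIso_of_bijOn (f := f) ?_ fun I _ => ?_
  · rw [hME, hdelE, ← hrange, ← image_univ]
    exact hf.injOn.bijOn_image
  · rw [Matroid.del, restrict_indep_iff, hNindep, hMindep, hNE, ← compl_eq_univ_sdiff, ← hrange]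
    have hli := linearIndepOn_image_iff_of_map_eq T.mulVecLin hT hf hcol I
    exact ⟨fun h => ⟨hli.mpr h, image_subset_range f I⟩, fun h => hli.mp h.1⟩

/-- Its columns are the images of the unit vectors (columns 0-3 of `P9mat`): columns 3, 4, 9, 8
of `PFW3mat`. -/
def p9ToPFW3 : Matrix (Fin 4) (Fin 4) (ZMod 2) := !![0,1,0,1; 0,0,1,0; 1,1,0,0; 0,0,1,1]

def p9ToPFW3Inv : Matrix (Fin 4) (Fin 4) (ZMod 2) := !![1,1,1,1; 1,1,0,1; 0,1,0,0; 0,1,0,1]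

def p9ColToPFW3 : Fin 9 → Fin 10 := ![3,4,9,8,5,6,7,1,0]

theorem p9ToPFW3Inv_mul : p9ToPFW3Inv * p9ToPFW3 = 1 := by decide

theorem p9ToPFW3_mulVec_col (j : Fin 9) : p9ToPFW3 *ᵥ P9matᵀ j = PFW3matᵀ (p9ColToPFW3 j) := by
  revert j; decide

theorem range_p9ColToPFW3 : range p9ColToPFW3 = {2}ᶜ := by
  ext y; revert y; decide

/-- P₉ is isomorphic to the generalized parallel connection P_Δ(F₇, M(W₃)) with the rim
element of the triangle (column 2) deleted. -/
theorem stmt_17 (P : Matroid (Fin 9)) (hP : IsBinaryRep P9mat P)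
    (G : Matroid (Fin 10)) (hG : IsBinaryRep PFW3mat G) :
    MatroidIso P (G.del {2}) := by
  have hT : Injective p9ToPFW3.mulVec := Matrix.mulVec_injective_iff_isUnit.mpr <|
    (Matrix.isUnit_iff_isUnit_det _).mpr (Matrix.isUnit_det_of_left_inverse p9ToPFW3Inv_mul)
  have hf : Injective p9ColToPFW3 := by decide
  exact hP.matroidIso_del hG hT hf range_p9ColToPFW3 p9ToPFW3_mulVec_col
end

section
/- The dual of the rank-4 binary matroid D₁ (the extension of P₉ by the column (1,1,1,0)ᵀ) is isomorphic to (P_Δ(F₇, F₇) \ z)*, where P_Δ(F₇, F₇) is the generalized parallel connection of two copies of the Fano matroid across a triangle and z is an element of that triangle. -/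
open Matroid Set

/-!
The change of basis `d1ToPFFBasis` of `GF(2)⁴` carries the columns of `D1mat` bijectively onto
the columns of `PFFmat` other than column `0`, an element of the common triangle. Hence `D₁` is
`P_Δ(F₇, F₇) \ 0` up to relabelling, and dualizing gives the isomorphism.
-/

theorem matroidIso_map {α β : Type*} (M : Matroid α) (f : α → β) (hf : InjOn f M.E) :
    MatroidIso M (M.map f hf) := by
  refine ⟨Equiv.Set.imageOfInjOn f M.E hf, fun I => ?_⟩
  have himage : ((↑) '' (Equiv.Set.imageOfInjOn f M.E hf '' I) : Set β) = f '' ((↑) '' I) := by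
    simp only [image_image]
    rfl
  exact (map_image_indep_iff (Subtype.coe_image_subset _ _)).symm.trans
    (iff_of_eq (congrArg (M.map f hf).Indep himage.symm))

section IsBinaryRep

open scoped Matrix

variable {n n' m m' : ℕ} {A : Matrix (Fin n) (Fin m) (ZMod 2)}
  {B : Matrix (Fin n') (Fin m') (ZMod 2)} {M : Matroid (Fin m)} {N : Matroid (Fin m')}
  {T : Matrix (Fin n') (Fin n) (ZMod 2)} {f : Fin m → Fin m'}

theorem IsBinaryRep.indep_iff_indep_image (hM : IsBinaryRep A M) (hN : IsBinaryRep B N)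
    (hT : Function.Injective T.mulVec) (hf : Function.Injective f)
    (hcol : ∀ j, T *ᵥ Aᵀ j = Bᵀ (f j)) (I : Set (Fin m)) :
    M.Indep I ↔ N.Indep (f '' I) := by
  let colA : Fin m → Fin n → ZMod 2 := fun j => Aᵀ j
  let colB : Fin m' → Fin n' → ZMod 2 := fun j => Bᵀ j
  have hBf : colB ∘ f = T.mulVecLin ∘ colA := funext fun j => (hcol j).symm
  rw [hM.2, hN.2]
  change LinearIndepOn _ colA I ↔ LinearIndepOn _ colB (f '' I)
  rw [← T.mulVecLin.linearIndepOn_iff_of_injOn hT.injOn, ← hBf]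
  exact ⟨fun h => h.image_of_comp _ _, fun h => h.comp_of_image hf.injOn⟩

theorem IsBinaryRep.restrict_range_eq_map (hM : IsBinaryRep A M) (hN : IsBinaryRep B N)
    (hT : Function.Injective T.mulVec) (hf : Function.Injective f)
    (hcol : ∀ j, T *ᵥ Aᵀ j = Bᵀ (f j)) :
    N ↾ range f = M.map f hf.injOn := by
  refine ext_indep (by simp [hM.1]) fun I hI => ?_
  rw [restrict_indep_iff, map_indep_iff]
  constructor
  · rintro ⟨hIndep, hI⟩
    have himage : f '' (f ⁻¹' I) = I := image_preimage_eq_of_subset hI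
    refine ⟨f ⁻¹' I, ?_, himage.symm⟩
    rwa [hM.indep_iff_indep_image hN hT hf hcol, himage]
  · rintro ⟨I₀, hI₀, rfl⟩
    exact ⟨(hM.indep_iff_indep_image hN hT hf hcol I₀).1 hI₀, image_subset_range _ _⟩

end IsBinaryRep

def d1ToPFFBasis : Matrix (Fin 4) (Fin 4) (ZMod 2) := !![0,0,0,1; 0,1,0,0; 0,0,1,1; 1,1,0,0]

def d1ToPFFColumn : Fin 10 → Fin 11 := ![7,9,3,4,10,8,6,2,1,5]

theorem d1ToPFFBasis_mulVec_injective : Function.Injective d1ToPFFBasis.mulVec :=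
  Function.LeftInverse.injective
    (g := (!![0,1,0,1; 0,1,0,0; 1,0,1,0; 1,0,0,0] : Matrix (Fin 4) (Fin 4) (ZMod 2)).mulVec)
    fun v => by rw [Matrix.mulVec_mulVec, show _ * d1ToPFFBasis = 1 by decide, Matrix.one_mulVec]

theorem d1ToPFFColumn_injective : Function.Injective d1ToPFFColumn := by decide

theorem range_d1ToPFFColumn : range d1ToPFFColumn = univ \ {0} := by
  ext x
  simp only [mem_range, mem_sdiff, mem_univ, mem_singleton_iff, true_and]
  revert x
  decide

theorem d1ToPFFBasis_mulVec_D1mat (j : Fin 10) :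
    d1ToPFFBasis.mulVec (D1mat.transpose j) = PFFmat.transpose (d1ToPFFColumn j) := by
  revert j
  decide

/-- The dual of D₁ is isomorphic to (P_Δ(F₇, F₇) \ z)* for some element z of the common
triangle (columns {0, 1, 2}). -/
theorem stmt_19 (D1 : Matroid (Fin 10)) (hD1 : IsBinaryRep D1mat D1)
    (G : Matroid (Fin 11)) (hG : IsBinaryRep PFFmat G) :
    ∃ z ∈ ({0, 1, 2} : Set (Fin 11)), MatroidIso D1✶ ((G.del {z})✶) := by
  refine ⟨0, by simp, ?_⟩
  have hdel : G.del {0} = D1.map d1ToPFFColumn d1ToPFFColumn_injective.injOn := by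
    rw [Matroid.del, hG.1, ← range_d1ToPFFColumn]
    exact hD1.restrict_range_eq_map hG d1ToPFFBasis_mulVec_injective d1ToPFFColumn_injective
      d1ToPFFBasis_mulVec_D1mat
  rw [hdel, map_dual]
  exact matroidIso_map _ _ _
end
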